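/- arXiv:2312.12177 — 2 statements merged into one kernel-verified Lean document; each statement's English description precedes it below -/
import Mathlib

section
/- Let a > b > 0, let A be a complex n×n matrix whose spectrum belongs to E_i = {λ ∈ ℂ : (Re λ)²/a² + (Im λ)²/b² < 1}, and let H be a Hermitian positive definite matrix satisfying H − (1/(2a²) + 1/(2b²))·A*HA − (1/(4a²) − 1/(4b²))·(HA² + (A*)²H) = I. If B is a complex n×n matrix with ‖B‖ < √(‖A‖² + b²/‖H‖) − ‖A‖ (operator norm), then for every complex n×n matrix C the equation K − (1/(2a²) + 1/(2b²))·(A+B)*K(A+B) − (1/(4a²) − 1/(4b²))·(K(A+B)² + ((A+B)*)²K) = C has a unique solution K. -/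
open Matrix
open scoped ComplexOrder Matrix.Norms.L2Operator

/-!
Write `Φ_M K = K - α MᴴKM - β (KM² + Mᴴ²K)`, with `α`, `β` the coefficients of the equation,
and `E z = (Re z)²/a² + (Im z)²/b²`. On a common eigenvector `K` of `K ↦ MᴴK` and `K ↦ KM`, with
eigenvalues `z` and `w`, `Φ_M` acts by the scalar `σ(z, w) = 1 - α zw - β (z² + w²)`, and
`Re σ(z, w) = 1 - (E z + E w)/2 + (a⁻² + b⁻²)/4 · |z - w̄|²`.
Since `z̄` and `w` are eigenvalues of `M`, `Φ_M` is injective, hence bijective, once the spectrum of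
`M` lies in the ellipse `E < 1`.

For `M = A + B` this comes from `Φ_A H = 1`: the bound on `‖B‖` makes `‖Φ_A H - Φ_M H‖ < 1`, so
`v* (Φ_M H) v` has positive real part for `v ≠ 0`, whereas for an eigenvector `Mv = μv` it equals
`(1 - E μ) v*Hv` with `v*Hv ≥ 0`.
-/

section NormedRing

variable {R : Type*} [SeminormedRing R]

lemma norm_add_sq_sub_sq_le (x y : R) : ‖(x + y) ^ 2 - x ^ 2‖ ≤ (‖x‖ + ‖y‖) ^ 2 - ‖x‖ ^ 2 := by
  have h : (x + y) ^ 2 - x ^ 2 = x * y + y * x + y * y := by noncomm_ring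
  calc ‖(x + y) ^ 2 - x ^ 2‖ ≤ ‖x‖ * ‖y‖ + ‖y‖ * ‖x‖ + ‖y‖ * ‖y‖ := by
        rw [h]
        exact norm_add₃_le.trans (add_le_add_three (norm_mul_le _ _) (norm_mul_le _ _)
          (norm_mul_le _ _))
    _ = (‖x‖ + ‖y‖) ^ 2 - ‖x‖ ^ 2 := by ring

variable [StarRing R] [NormedStarGroup R]

lemma norm_star_add_mul_mul_add_sub_le (x y k : R) :
    ‖star (x + y) * k * (x + y) - star x * k * x‖ ≤ ‖k‖ * ((‖x‖ + ‖y‖) ^ 2 - ‖x‖ ^ 2) := by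
  have h : star (x + y) * k * (x + y) - star x * k * x
      = star x * k * y + star y * k * x + star y * k * y := by
    rw [star_add]; noncomm_ring
  have hmul : ∀ u v : R, ‖star u * k * v‖ ≤ ‖u‖ * ‖k‖ * ‖v‖ := fun u v => by
    calc ‖star u * k * v‖ ≤ ‖star u‖ * ‖k‖ * ‖v‖ := norm_mul₃_le
      _ = ‖u‖ * ‖k‖ * ‖v‖ := by rw [norm_star]
  calc ‖star (x + y) * k * (x + y) - star x * k * x‖
      ≤ ‖x‖ * ‖k‖ * ‖y‖ + ‖y‖ * ‖k‖ * ‖x‖ + ‖y‖ * ‖k‖ * ‖y‖ := by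
        rw [h]
        exact norm_add₃_le.trans (add_le_add_three (hmul x y) (hmul y x) (hmul y y))
    _ = ‖k‖ * ((‖x‖ + ‖y‖) ^ 2 - ‖x‖ ^ 2) := by ring

end NormedRing

lemma re_inner_apply_pos_of_norm_one_sub_lt_one {𝕜 E : Type*} [RCLike 𝕜] [NormedAddCommGroup E]
    [InnerProductSpace 𝕜 E] {T : E →L[𝕜] E} (hT : ‖1 - T‖ < 1) {x : E} (hx : x ≠ 0) :
    0 < RCLike.re (inner 𝕜 x (T x)) := by
  have hx' : 0 < ‖x‖ := norm_pos_iff.mpr hx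
  have hsplit : T x = x - (1 - T) x := by simp
  have hcs : RCLike.re (inner 𝕜 x ((1 - T) x)) ≤ ‖1 - T‖ * ‖x‖ ^ 2 :=
    calc RCLike.re (inner 𝕜 x ((1 - T) x)) ≤ ‖x‖ * ‖(1 - T) x‖ := re_inner_le_norm _ _
      _ ≤ ‖x‖ * (‖1 - T‖ * ‖x‖) := by gcongr; exact (1 - T).le_opNorm x
      _ = ‖1 - T‖ * ‖x‖ ^ 2 := by ring
  have hlt : ‖1 - T‖ * ‖x‖ ^ 2 < ‖x‖ ^ 2 := by nlinarith [pow_pos hx' 2]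
  rw [hsplit, inner_sub_right, map_sub, inner_self_eq_norm_sq]
  linarith

lemma spectrum.mem_of_mul_eq_smul {R A : Type*} [CommRing R] [Ring A] [Algebra R A] {a x : A}
    {r : R} (hx : x ≠ 0) (h : a * x = r • x) : r ∈ spectrum R a := by
  refine spectrum.mem_iff.mpr fun hu => hx (hu.mul_right_eq_zero.mp ?_)
  rw [sub_mul, h, Algebra.algebraMap_eq_smul_one, smul_one_mul, sub_self]

lemma spectrum.mem_of_mul_eq_smul' {R A : Type*} [CommRing R] [Ring A] [Algebra R A] {a x : A}
    {r : R} (hx : x ≠ 0) (h : x * a = r • x) : r ∈ spectrum R a := by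
  refine spectrum.mem_iff.mpr fun hu => hx (hu.mul_left_eq_zero.mp ?_)
  rw [mul_sub, h, Algebra.algebraMap_eq_smul_one, mul_smul_one, sub_self]

lemma mul_add_sq_sub_sq_lt_of_lt_sqrt_sub {b h x y : ℝ} (hb : 0 < b) (hh : 0 ≤ h) (hxy : 0 ≤ x + y)
    (hlt : y < √(x ^ 2 + b ^ 2 / h) - x) : h * ((x + y) ^ 2 - x ^ 2) < b ^ 2 := by
  have hsq : (x + y) ^ 2 < x ^ 2 + b ^ 2 / h := (Real.lt_sqrt hxy).mp (by linarith)
  rcases hh.eq_or_lt with rfl | hpos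
  · simpa using pow_pos hb 2
  · calc h * ((x + y) ^ 2 - x ^ 2) < h * (b ^ 2 / h) := by gcongr; linarith
      _ = b ^ 2 := mul_div_cancel₀ _ hpos.ne'

section Eigenvector

variable {K V : Type*} [Field K] [IsAlgClosed K] [AddCommGroup V] [Module K V]
  [FiniteDimensional K V]

lemma Submodule.exists_eigenvector_mem {p : Submodule K V} (hp : p ≠ ⊥) {f : Module.End K V}
    (hf : ∀ x ∈ p, f x ∈ p) : ∃ μ : K, ∃ x ∈ p, x ≠ 0 ∧ f x = μ • x := by
  have : Nontrivial p := Submodule.nontrivial_iff_ne_bot.mpr hp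
  obtain ⟨μ, hμ⟩ := Module.End.exists_eigenvalue (f.restrict hf)
  obtain ⟨x, hx⟩ := hμ.exists_hasEigenvector
  exact ⟨μ, x, x.2, by simpa using hx.2, by simpa using congrArg Subtype.val hx.apply_eq_smul⟩

lemma Submodule.exists_common_eigenvector_mem {p : Submodule K V} (hp : p ≠ ⊥)
    {f g : Module.End K V} (hfg : Commute f g) (hf : ∀ x ∈ p, f x ∈ p)
    (hg : ∀ x ∈ p, g x ∈ p) :
    ∃ μ ν : K, ∃ x ∈ p, x ≠ 0 ∧ f x = μ • x ∧ g x = ν • x := by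
  obtain ⟨μ, x, hxp, hx0, hfx⟩ := p.exists_eigenvector_mem hp hf
  have hq : p ⊓ f.eigenspace μ ≠ ⊥ :=
    (Submodule.ne_bot_iff _).mpr ⟨x, ⟨hxp, Module.End.mem_eigenspace_iff.mpr hfx⟩, hx0⟩
  have hgq : ∀ y ∈ p ⊓ f.eigenspace μ, g y ∈ p ⊓ f.eigenspace μ := by
    rintro y ⟨hyp, hyμ⟩
    refine ⟨hg y hyp, Module.End.mem_eigenspace_iff.mpr ?_⟩
    rw [← Module.End.mul_apply, hfg.eq, Module.End.mul_apply,
      Module.End.mem_eigenspace_iff.mp hyμ, map_smul]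
  obtain ⟨ν, y, ⟨hyp, hyμ⟩, hy0, hgy⟩ := (p ⊓ f.eigenspace μ).exists_eigenvector_mem hq hgq
  exact ⟨μ, ν, y, hyp, hy0, Module.End.mem_eigenspace_iff.mp hyμ, hgy⟩

end Eigenvector

def ellipseInterior (a b : ℝ) : Set ℂ := {z | z.re ^ 2 / a ^ 2 + z.im ^ 2 / b ^ 2 < 1}

noncomputable def ellipseSymbol (a b : ℝ) (z w : ℂ) : ℂ :=
  1 - ((1 / (2 * a ^ 2) + 1 / (2 * b ^ 2) : ℝ) : ℂ) * (z * w)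
    - ((1 / (4 * a ^ 2) - 1 / (4 * b ^ 2) : ℝ) : ℂ) * (w ^ 2 + z ^ 2)

lemma ellipseSymbol_star_self (a b : ℝ) (z : ℂ) :
    ellipseSymbol a b (star z) z = ((1 - (z.re ^ 2 / a ^ 2 + z.im ^ 2 / b ^ 2) : ℝ) : ℂ) := by
  apply Complex.ext
  · rw [ellipseSymbol, Complex.sub_re, Complex.sub_re, Complex.re_ofReal_mul, Complex.re_ofReal_mul]
    simp only [Complex.one_re, Complex.mul_re, Complex.add_re, pow_two, Complex.star_def,
      Complex.conj_re, Complex.conj_im, Complex.ofReal_re]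
    ring
  · rw [ellipseSymbol, Complex.sub_im, Complex.sub_im, Complex.im_ofReal_mul, Complex.im_ofReal_mul]
    simp only [Complex.one_im, Complex.mul_im, Complex.add_im, pow_two, Complex.star_def,
      Complex.conj_re, Complex.conj_im, Complex.ofReal_im]
    ring

lemma re_ellipseSymbol (a b : ℝ) (z w : ℂ) :
    (ellipseSymbol a b z w).re
      = 1 - ((z.re ^ 2 / a ^ 2 + z.im ^ 2 / b ^ 2) + (w.re ^ 2 / a ^ 2 + w.im ^ 2 / b ^ 2)) / 2
        + ((a ^ 2)⁻¹ + (b ^ 2)⁻¹) / 4 * ((z.re - w.re) ^ 2 + (z.im + w.im) ^ 2) := by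
  rw [ellipseSymbol, Complex.sub_re, Complex.sub_re, Complex.re_ofReal_mul, Complex.re_ofReal_mul]
  simp only [Complex.one_re, Complex.mul_re, Complex.add_re, pow_two]
  ring

lemma star_mem_ellipseInterior_iff {a b : ℝ} {z : ℂ} :
    star z ∈ ellipseInterior a b ↔ z ∈ ellipseInterior a b := by
  simp [ellipseInterior]

lemma re_ellipseSymbol_pos {a b : ℝ} {z w : ℂ} (hz : z ∈ ellipseInterior a b)
    (hw : w ∈ ellipseInterior a b) : 0 < (ellipseSymbol a b z w).re := by
  have hc : 0 ≤ ((a ^ 2)⁻¹ + (b ^ 2)⁻¹) / 4 * ((z.re - w.re) ^ 2 + (z.im + w.im) ^ 2) := by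
    positivity
  rw [ellipseInterior, Set.mem_ofPred_eq] at hz hw
  linarith [re_ellipseSymbol a b z w]

section Matrix

variable {n : Type*} [Fintype n] [DecidableEq n]

lemma Matrix.re_dotProduct_mulVec_pos_of_norm_one_sub_lt_one {N : Matrix n n ℂ}
    (hN : ‖1 - N‖ < 1) {v : n → ℂ} (hv : v ≠ 0) : 0 < (star v ⬝ᵥ (N *ᵥ v)).re := by
  have hT : ‖1 - toEuclideanCLM (𝕜 := ℂ) N‖ < 1 := by
    rwa [← map_one (toEuclideanCLM (n := n) (𝕜 := ℂ)), ← map_sub]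
  have := re_inner_apply_pos_of_norm_one_sub_lt_one hT (x := WithLp.toLp 2 v) (by simpa using hv)
  rwa [toEuclideanCLM_toLp, EuclideanSpace.inner_toLp_toLp, dotProduct_comm] at this

lemma Matrix.exists_mulVec_eq_smul_of_mem_spectrum {M : Matrix n n ℂ} {μ : ℂ}
    (hμ : μ ∈ spectrum ℂ M) : ∃ v ≠ 0, M *ᵥ v = μ • v := by
  rw [← Matrix.spectrum_toLin', ← Module.End.hasEigenvalue_iff_mem_spectrum] at hμ
  obtain ⟨v, hv⟩ := hμ.exists_hasEigenvector
  exact ⟨v, hv.2, by simpa using hv.apply_eq_smul⟩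

noncomputable def ellipseMap (a b : ℝ) (M : Matrix n n ℂ) :
    Matrix n n ℂ →ₗ[ℂ] Matrix n n ℂ where
  toFun K := K - ((1 / (2 * a ^ 2) + 1 / (2 * b ^ 2) : ℝ) : ℂ) • (Mᴴ * K * M)
    - ((1 / (4 * a ^ 2) - 1 / (4 * b ^ 2) : ℝ) : ℂ) • (K * M ^ 2 + Mᴴ ^ 2 * K)
  map_add' K L := by
    simp only [Matrix.mul_add, Matrix.add_mul, smul_add]
    abel
  map_smul' c K := by
    simp only [Matrix.mul_smul, Matrix.smul_mul, RingHom.id_apply]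
    module

variable {a b : ℝ} {M : Matrix n n ℂ}

lemma ellipseMap_conjTranspose_mul (K : Matrix n n ℂ) :
    ellipseMap a b M (Mᴴ * K) = Mᴴ * ellipseMap a b M K := by
  simp only [ellipseMap, LinearMap.coe_mk, AddHom.coe_mk, Matrix.mul_sub, Matrix.mul_smul,
    Matrix.mul_add, pow_two, Matrix.mul_assoc]

lemma ellipseMap_mul (K : Matrix n n ℂ) :
    ellipseMap a b M (K * M) = ellipseMap a b M K * M := by
  simp only [ellipseMap, LinearMap.coe_mk, AddHom.coe_mk, Matrix.sub_mul, Matrix.smul_mul,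
    Matrix.add_mul, pow_two, Matrix.mul_assoc]

lemma ellipseMap_eq_smul {K : Matrix n n ℂ} {z w : ℂ} (hz : Mᴴ * K = z • K) (hw : K * M = w • K) :
    ellipseMap a b M K = ellipseSymbol a b z w • K := by
  have h1 : Mᴴ * K * M = (z * w) • K := by
    rw [Matrix.mul_assoc, hw, Matrix.mul_smul, hz, smul_smul, mul_comm]
  have h2 : K * M ^ 2 = w ^ 2 • K := by
    rw [pow_two, ← Matrix.mul_assoc, hw, Matrix.smul_mul, hw, smul_smul, pow_two]
  have h3 : Mᴴ ^ 2 * K = z ^ 2 • K := by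
    rw [pow_two, Matrix.mul_assoc, hz, Matrix.mul_smul, hz, smul_smul, pow_two]
  simp only [ellipseMap, LinearMap.coe_mk, AddHom.coe_mk, h1, h2, h3, ellipseSymbol]
  module

lemma dotProduct_ellipseMap_mulVec {v : n → ℂ} {μ : ℂ} (hv : M *ᵥ v = μ • v) (K : Matrix n n ℂ) :
    star v ⬝ᵥ (ellipseMap a b M K *ᵥ v)
      = ellipseSymbol a b (star μ) μ * (star v ⬝ᵥ (K *ᵥ v)) := by
  have hadj : ∀ y, star v ⬝ᵥ (Mᴴ *ᵥ y) = star μ * (star v ⬝ᵥ y) := fun y => by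
    rw [dotProduct_mulVec, ← star_mulVec, hv, star_smul, smul_dotProduct, smul_eq_mul]
  have hM2 : M ^ 2 *ᵥ v = μ ^ 2 • v := by
    rw [pow_two, ← mulVec_mulVec, hv, mulVec_smul, hv, smul_smul, pow_two]
  simp only [ellipseMap, LinearMap.coe_mk, AddHom.coe_mk, sub_mulVec, add_mulVec, smul_mulVec,
    ← mulVec_mulVec, hv, hM2, pow_two Mᴴ, mulVec_smul, dotProduct_sub, dotProduct_add,
    dotProduct_smul, hadj, ellipseSymbol, smul_eq_mul]
  ring

lemma norm_ellipseMap_add_sub_le (a b : ℝ) (A B K : Matrix n n ℂ) :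
    ‖ellipseMap a b (A + B) K - ellipseMap a b A K‖
      ≤ max (a ^ 2)⁻¹ (b ^ 2)⁻¹ * (‖K‖ * ((‖A‖ + ‖B‖) ^ 2 - ‖A‖ ^ 2)) := by
  set δ := ‖K‖ * ((‖A‖ + ‖B‖) ^ 2 - ‖A‖ ^ 2)
  set D := (A + B) ^ 2 - A ^ 2
  have hdiff : ellipseMap a b (A + B) K - ellipseMap a b A K
      = -(((1 / (2 * a ^ 2) + 1 / (2 * b ^ 2) : ℝ) : ℂ) • ((A + B)ᴴ * K * (A + B) - Aᴴ * K * A))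
        - ((1 / (4 * a ^ 2) - 1 / (4 * b ^ 2) : ℝ) : ℂ) • (K * D + Dᴴ * K) := by
    simp only [ellipseMap, LinearMap.coe_mk, AddHom.coe_mk, D, conjTranspose_sub,
      conjTranspose_pow, Matrix.mul_sub, Matrix.sub_mul]
    module
  have hD : ‖D‖ ≤ (‖A‖ + ‖B‖) ^ 2 - ‖A‖ ^ 2 := norm_add_sq_sub_sq_le A B
  have h1 : ‖(A + B)ᴴ * K * (A + B) - Aᴴ * K * A‖ ≤ δ := norm_star_add_mul_mul_add_sub_le A B K
  have h2 : ‖K * D + Dᴴ * K‖ ≤ 2 * δ :=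
    calc ‖K * D + Dᴴ * K‖ ≤ ‖K‖ * ‖D‖ + ‖D‖ * ‖K‖ := by
          grw [norm_add_le, norm_mul_le, norm_mul_le, l2_opNorm_conjTranspose]
      _ ≤ 2 * δ := by grw [hD]; simp only [δ]; linarith
  have hcoef : |1 / (2 * a ^ 2) + 1 / (2 * b ^ 2)| + |1 / (4 * a ^ 2) - 1 / (4 * b ^ 2)| * 2
      = max (a ^ 2)⁻¹ (b ^ 2)⁻¹ := by
    have ha : 0 ≤ (a ^ 2)⁻¹ := by positivity
    have hb : 0 ≤ (b ^ 2)⁻¹ := by positivity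
    simp only [one_div, mul_inv]
    rcases le_total (a ^ 2)⁻¹ (b ^ 2)⁻¹ with h | h
    · rw [max_eq_right h, abs_of_nonneg (by positivity), abs_of_nonpos (by linarith)]; ring
    · rw [max_eq_left h, abs_of_nonneg (by positivity), abs_of_nonneg (by linarith)]; ring
  calc _ ≤ |1 / (2 * a ^ 2) + 1 / (2 * b ^ 2)| * δ
        + |1 / (4 * a ^ 2) - 1 / (4 * b ^ 2)| * (2 * δ) := by
        rw [hdiff]
        grw [norm_sub_le, norm_neg, norm_smul, norm_smul, h1, h2, Complex.norm_real,
          Complex.norm_real, Real.norm_eq_abs, Real.norm_eq_abs]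
    _ = _ := by rw [← hcoef]; ring

lemma ellipseMap_injective (hM : spectrum ℂ M ⊆ ellipseInterior a b) :
    Function.Injective (ellipseMap a b M) := by
  rw [← LinearMap.ker_eq_bot]
  by_contra hker
  have hcomm : Commute (LinearMap.mulLeft ℂ Mᴴ) (LinearMap.mulRight ℂ M) :=
    LinearMap.ext fun K => (Matrix.mul_assoc _ _ _).symm
  obtain ⟨z, w, K, hK, hK0, hz, hw⟩ :=
    (LinearMap.ker (ellipseMap a b M)).exists_common_eigenvector_mem hker hcomm
      (fun K hK => by simp_all [ellipseMap_conjTranspose_mul])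
      (fun K hK => by simp_all [ellipseMap_mul])
  simp only [LinearMap.mulLeft_apply, LinearMap.mulRight_apply] at hz hw
  have hσ : ellipseSymbol a b z w = 0 := by
    have h := ellipseMap_eq_smul (a := a) (b := b) hz hw
    rw [LinearMap.mem_ker.mp hK] at h
    exact (smul_eq_zero.mp h.symm).resolve_right hK0
  have hzs : star z ∈ spectrum ℂ M := by
    rw [← Set.mem_star, ← spectrum.map_star, star_eq_conjTranspose]
    exact spectrum.mem_of_mul_eq_smul hK0 hz
  have hws : w ∈ spectrum ℂ M := spectrum.mem_of_mul_eq_smul' hK0 hw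
  have := re_ellipseSymbol_pos (star_mem_ellipseInterior_iff.mp (hM hzs)) (hM hws)
  simp [hσ] at this

lemma spectrum_subset_ellipseInterior {H : Matrix n n ℂ} (hH : H.PosSemidef)
    (h : ‖1 - ellipseMap a b M H‖ < 1) : spectrum ℂ M ⊆ ellipseInterior a b := by
  intro μ hμ
  obtain ⟨v, hv, hMv⟩ := exists_mulVec_eq_smul_of_mem_spectrum hμ
  have hpos := re_dotProduct_mulVec_pos_of_norm_one_sub_lt_one h hv
  rw [dotProduct_ellipseMap_mulVec hMv, ellipseSymbol_star_self, Complex.re_ofReal_mul] at hpos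
  have hH' : 0 ≤ (star v ⬝ᵥ (H *ᵥ v)).re := (Complex.le_def.mp (hH.dotProduct_mulVec_nonneg v)).1
  by_contra hout
  simp only [ellipseInterior, Set.mem_ofPred_eq, not_lt] at hout
  nlinarith

lemma norm_one_sub_ellipseMap_add_lt_one {A B H : Matrix n n ℂ} (hba : b ≤ a) (hb : 0 < b)
    (hH : ellipseMap a b A H = 1) (hB : ‖B‖ < √(‖A‖ ^ 2 + b ^ 2 / ‖H‖) - ‖A‖) :
    ‖1 - ellipseMap a b (A + B) H‖ < 1 := by
  have hmax : max (a ^ 2)⁻¹ (b ^ 2)⁻¹ = (b ^ 2)⁻¹ :=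
    max_eq_right (inv_anti₀ (by positivity) (pow_le_pow_left₀ hb.le hba 2))
  have hsmall : ‖H‖ * ((‖A‖ + ‖B‖) ^ 2 - ‖A‖ ^ 2) < b ^ 2 :=
    mul_add_sq_sub_sq_lt_of_lt_sqrt_sub hb (norm_nonneg H) (by positivity) hB
  calc ‖1 - ellipseMap a b (A + B) H‖
      ≤ max (a ^ 2)⁻¹ (b ^ 2)⁻¹ * (‖H‖ * ((‖A‖ + ‖B‖) ^ 2 - ‖A‖ ^ 2)) := by
        rw [← hH, norm_sub_rev]
        exact norm_ellipseMap_add_sub_le a b A B H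
    _ < 1 := by
        rw [hmax, inv_mul_lt_iff₀ (by positivity)]
        linarith

end Matrix

theorem perturbed_ellipse_equation_unique_solvable_general {n : ℕ} (a b : ℝ) (hba : b < a) (hb : 0 < b)
    (A : Matrix (Fin n) (Fin n) ℂ)
    (H : Matrix (Fin n) (Fin n) ℂ) (hH : H.PosDef)
    (heq : H - ((1 / (2 * a ^ 2) + 1 / (2 * b ^ 2) : ℝ) : ℂ) • (Aᴴ * H * A)
      - ((1 / (4 * a ^ 2) - 1 / (4 * b ^ 2) : ℝ) : ℂ) • (H * A ^ 2 + Aᴴ ^ 2 * H) = 1)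
    (B : Matrix (Fin n) (Fin n) ℂ)
    (hB : ‖B‖ < Real.sqrt (‖A‖ ^ 2 + b ^ 2 / ‖H‖) - ‖A‖) :
    ∀ C : Matrix (Fin n) (Fin n) ℂ,
      ∃! K : Matrix (Fin n) (Fin n) ℂ,
        K - ((1 / (2 * a ^ 2) + 1 / (2 * b ^ 2) : ℝ) : ℂ) • ((A + B)ᴴ * K * (A + B))
          - ((1 / (4 * a ^ 2) - 1 / (4 * b ^ 2) : ℝ) : ℂ) •
            (K * (A + B) ^ 2 + ((A + B)ᴴ) ^ 2 * K) = C := by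
  have hspec : spectrum ℂ (A + B) ⊆ ellipseInterior a b :=
    spectrum_subset_ellipseInterior hH.posSemidef
      (norm_one_sub_ellipseMap_add_lt_one hba.le hb heq hB)
  have hinj := ellipseMap_injective hspec
  exact Function.Bijective.existsUnique ⟨hinj, LinearMap.injective_iff_surjective.mp hinj⟩

/-- Under the norm-perturbation condition for the interior of the ellipse, the
elliptic Lyapunov-type equation for the perturbed matrix `A + B` is uniquely
solvable for every right-hand side `C`. -/
theorem perturbed_ellipse_equation_unique_solvable {n : ℕ} (a b : ℝ) (hba : b < a) (hb : 0 < b)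
    (A : Matrix (Fin n) (Fin n) ℂ)
    (hA : ∀ μ ∈ spectrum ℂ A, μ.re ^ 2 / a ^ 2 + μ.im ^ 2 / b ^ 2 < 1)
    (H : Matrix (Fin n) (Fin n) ℂ) (hH : H.PosDef)
    (heq : H - ((1 / (2 * a ^ 2) + 1 / (2 * b ^ 2) : ℝ) : ℂ) • (Aᴴ * H * A)
      - ((1 / (4 * a ^ 2) - 1 / (4 * b ^ 2) : ℝ) : ℂ) • (H * A ^ 2 + Aᴴ ^ 2 * H) = 1)
    (B : Matrix (Fin n) (Fin n) ℂ)
    (hB : ‖B‖ < Real.sqrt (‖A‖ ^ 2 + b ^ 2 / ‖H‖) - ‖A‖) :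
    ∀ C : Matrix (Fin n) (Fin n) ℂ,
      ∃! K : Matrix (Fin n) (Fin n) ℂ,
        K - ((1 / (2 * a ^ 2) + 1 / (2 * b ^ 2) : ℝ) : ℂ) • ((A + B)ᴴ * K * (A + B))
          - ((1 / (4 * a ^ 2) - 1 / (4 * b ^ 2) : ℝ) : ℂ) •
            (K * (A + B) ^ 2 + ((A + B)ᴴ) ^ 2 * K) = C :=
  perturbed_ellipse_equation_unique_solvable_general a b hba hb A H hH heq B hB
end

section
/- Let p > 0 and let C be a Hermitian positive definite complex n×n matrix. If there exists a Hermitian positive definite complex n×n matrix H satisfying HA + A*H − (1/(2p))·A*HA + (1/(4p))·(HA² + (A*)²H) = −C, then the spectrum of A belongs to the exterior parabolic region P_e = {λ ∈ ℂ : (Im λ)² > 2p·Re λ}. -/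
open Matrix
open scoped ComplexOrder

/-!
If `A v = μ v` with `v ≠ 0`, the quadratic form `v* X v` of each term of the equation is a
multiple of `h = v* H v > 0`, so the equation collapses to the scalar identity
`(2 Re μ - (Im μ)² / p) · h = -v* C v < 0`; hence `2 Re μ - (Im μ)² / p < 0`.
-/

namespace Matrix

theorem exists_mulVec_eq_smul_of_mem_spectrum_s11 {K n : Type*} [Field K] [Fintype n]
    [DecidableEq n] {A : Matrix n n K} {μ : K} (hμ : μ ∈ spectrum K A) :
    ∃ v : n → K, v ≠ 0 ∧ A *ᵥ v = μ • v := by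
  rw [← spectrum_toLin', ← Module.End.hasEigenvalue_iff_mem_spectrum] at hμ
  obtain ⟨v, hv⟩ := hμ.exists_hasEigenvector
  exact ⟨v, hv.2, by simpa using hv.apply_eq_smul⟩

section Eigenvector

variable {R n : Type*} [CommSemiring R] [Fintype n]
  {A : Matrix n n R} {μ : R} {v : n → R}

theorem dotProduct_mul_mulVec_of_mulVec_eq_smul (hv : A *ᵥ v = μ • v) (M : Matrix n n R)
    (w : n → R) : w ⬝ᵥ ((M * A) *ᵥ v) = μ * (w ⬝ᵥ (M *ᵥ v)) := by
  rw [← mulVec_mulVec, hv, mulVec_smul, dotProduct_smul, smul_eq_mul]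

theorem star_dotProduct_conjTranspose_mul_mulVec_of_mulVec_eq_smul [StarRing R]
    (hv : A *ᵥ v = μ • v) (M : Matrix n n R) (w : n → R) :
    star v ⬝ᵥ ((Aᴴ * M) *ᵥ w) = star μ * (star v ⬝ᵥ (M *ᵥ w)) := by
  rw [← mulVec_mulVec, dotProduct_mulVec, ← star_mulVec, hv, star_smul, smul_dotProduct,
    smul_eq_mul]

end Eigenvector

end Matrix

noncomputable def parabolicLyapunov {n : Type*} [Fintype n] [DecidableEq n] (p : ℝ)
    (A H : Matrix n n ℂ) : Matrix n n ℂ :=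
  H * A + Aᴴ * H - ((1 / (2 * p) : ℝ) : ℂ) • (Aᴴ * H * A)
    + ((1 / (4 * p) : ℝ) : ℂ) • (H * A ^ 2 + Aᴴ ^ 2 * H)

theorem parabolicSymbol_eq (p : ℝ) (μ : ℂ) :
    μ + star μ - ((1 / (2 * p) : ℝ) : ℂ) * (star μ * μ)
      + ((1 / (4 * p) : ℝ) : ℂ) * (μ ^ 2 + star μ ^ 2)
      = ((2 * μ.re - μ.im ^ 2 / p : ℝ) : ℂ) := by
  apply Complex.ext <;>
    simp only [pow_two, RCLike.star_def, Complex.add_re, Complex.sub_re, Complex.mul_re,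
      Complex.add_im, Complex.sub_im, Complex.mul_im, Complex.conj_re, Complex.conj_im,
      Complex.ofReal_re, Complex.ofReal_im] <;>
    ring

theorem star_dotProduct_parabolicLyapunov_mulVec {n : Type*} [Fintype n] [DecidableEq n]
    (p : ℝ) {A : Matrix n n ℂ} (H : Matrix n n ℂ) {μ : ℂ} {v : n → ℂ}
    (hv : A *ᵥ v = μ • v) :
    star v ⬝ᵥ (parabolicLyapunov p A H *ᵥ v)
      = ((2 * μ.re - μ.im ^ 2 / p : ℝ) : ℂ) * (star v ⬝ᵥ (H *ᵥ v)) := by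
  have hv2 : A ^ 2 *ᵥ v = μ ^ 2 • v := by
    rw [pow_two, ← mulVec_mulVec, hv, mulVec_smul, hv, smul_smul, pow_two]
  simp only [parabolicLyapunov, add_mulVec, sub_mulVec, smul_mulVec, dotProduct_add,
    dotProduct_sub, dotProduct_smul, smul_eq_mul, ← conjTranspose_pow,
    dotProduct_mul_mulVec_of_mulVec_eq_smul hv, dotProduct_mul_mulVec_of_mulVec_eq_smul hv2,
    star_dotProduct_conjTranspose_mul_mulVec_of_mulVec_eq_smul hv,
    star_dotProduct_conjTranspose_mul_mulVec_of_mulVec_eq_smul hv2, star_pow,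
    ← parabolicSymbol_eq]
  ring

theorem Complex.neg_of_ofReal_mul_eq_neg {r : ℝ} {h c : ℂ} (hh : 0 < h) (hc : 0 < c)
    (e : (r : ℂ) * h = -c) : r < 0 := by
  by_contra! hr
  have : 0 ≤ (r : ℂ) * h := mul_nonneg (Complex.zero_le_real.mpr hr) hh.le
  rw [e, neg_nonneg] at this
  exact this.not_gt hc

/-- If the parabolic Lyapunov-type equation with right-hand side `-C` has a Hermitian
positive definite solution, then the spectrum of `A` lies in the open exterior
parabolic region `P_e = {λ : (Im λ)² > 2p·Re λ}`. -/
theorem spectrum_in_parabola_exterior_of_lyapunov {n : ℕ} (p : ℝ) (hp : 0 < p)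
    (C : Matrix (Fin n) (Fin n) ℂ) (hC : C.PosDef) (A : Matrix (Fin n) (Fin n) ℂ)
    (H : Matrix (Fin n) (Fin n) ℂ) (hH : H.PosDef)
    (heq : H * A + Aᴴ * H - ((1 / (2 * p) : ℝ) : ℂ) • (Aᴴ * H * A)
      + ((1 / (4 * p) : ℝ) : ℂ) • (H * A ^ 2 + Aᴴ ^ 2 * H) = -C) :
    ∀ μ ∈ spectrum ℂ A, 2 * p * μ.re < μ.im ^ 2 := by
  intro μ hμ
  obtain ⟨v, hv0, hv⟩ := exists_mulVec_eq_smul_of_mem_spectrum_s11 hμ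
  have hform := star_dotProduct_parabolicLyapunov_mulVec p H hv
  rw [show parabolicLyapunov p A H = -C from heq, neg_mulVec, dotProduct_neg] at hform
  have hneg := Complex.neg_of_ofReal_mul_eq_neg (hH.dotProduct_mulVec_pos hv0)
    (hC.dotProduct_mulVec_pos hv0) hform.symm
  rw [sub_neg, lt_div_iff₀ hp] at hneg
  linarith
end
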